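/- Let q : ℤ × ℝ² → ℝ be smooth, a = exp(q̄ − q), a̲ = exp(q − q̲), b = q₁. If q satisfies q₁₁ = a − a̲ and q₂ = b² + a + a̲ at every lattice site, then ΔL₁₂ − D₁L₀₂ + D₂L₀₁ = 0, where L₀₁ = (1/2)q₁² − a, L₀₂ = q₁q₂ − (1/3)q₁³ − (q₁+q̄₁)a, L₁₂ = −a(q̄₁² + q̄₁₁ − q̄₂ + a), Δ is the backward lattice difference, and Dᵢ is the total t-i derivative. -/

import Mathlib

noncomputable def pd1 (f : ℝ → ℝ → ℝ) : ℝ → ℝ → ℝ :=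
  fun t1 t2 => deriv (fun s => f s t2) t1

noncomputable def pd2 (f : ℝ → ℝ → ℝ) : ℝ → ℝ → ℝ :=
  fun t1 t2 => deriv (fun s => f t1 s) t2

section helpers
variable {f : ℝ → ℝ → ℝ}

lemma pd1_fderiv (hf : ContDiff ℝ (⊤ : ℕ∞) (fun p : ℝ × ℝ => f p.1 p.2)) (t1 t2 : ℝ) :
    pd1 f t1 t2 = fderiv ℝ (fun p : ℝ × ℝ => f p.1 p.2) (t1, t2) (1, 0) := by
  have h1 : HasDerivAt (fun s : ℝ => (s, t2)) ((1:ℝ), (0:ℝ)) t1 :=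
    (hasDerivAt_id t1).prodMk (hasDerivAt_const t1 t2)
  exact (((hf.differentiable (by simp) (t1, t2)).hasFDerivAt).comp_hasDerivAt t1 h1).deriv

lemma pd2_fderiv (hf : ContDiff ℝ (⊤ : ℕ∞) (fun p : ℝ × ℝ => f p.1 p.2)) (t1 t2 : ℝ) :
    pd2 f t1 t2 = fderiv ℝ (fun p : ℝ × ℝ => f p.1 p.2) (t1, t2) (0, 1) := by
  have h1 : HasDerivAt (fun s : ℝ => (t1, s)) ((0:ℝ), (1:ℝ)) t2 :=
    (hasDerivAt_const t2 t1).prodMk (hasDerivAt_id t2)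
  exact (((hf.differentiable (by simp) (t1, t2)).hasFDerivAt).comp_hasDerivAt t2 h1).deriv

lemma hda_pd1 (hf : ContDiff ℝ (⊤ : ℕ∞) (fun p : ℝ × ℝ => f p.1 p.2)) (t1 t2 : ℝ) :
    HasDerivAt (fun s => f s t2) (pd1 f t1 t2) t1 := by
  rw [pd1_fderiv hf]
  have h1 : HasDerivAt (fun s : ℝ => (s, t2)) ((1:ℝ), (0:ℝ)) t1 :=
    (hasDerivAt_id t1).prodMk (hasDerivAt_const t1 t2)
  exact ((hf.differentiable (by simp) (t1, t2)).hasFDerivAt).comp_hasDerivAt t1 h1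

lemma hda_pd2 (hf : ContDiff ℝ (⊤ : ℕ∞) (fun p : ℝ × ℝ => f p.1 p.2)) (t1 t2 : ℝ) :
    HasDerivAt (fun s => f t1 s) (pd2 f t1 t2) t2 := by
  rw [pd2_fderiv hf]
  have h1 : HasDerivAt (fun s : ℝ => (t1, s)) ((0:ℝ), (1:ℝ)) t2 :=
    (hasDerivAt_const t2 t1).prodMk (hasDerivAt_id t2)
  exact ((hf.differentiable (by simp) (t1, t2)).hasFDerivAt).comp_hasDerivAt t2 h1

lemma cd_pd1 (hf : ContDiff ℝ (⊤ : ℕ∞) (fun p : ℝ × ℝ => f p.1 p.2)) :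
    ContDiff ℝ (⊤ : ℕ∞) (fun p : ℝ × ℝ => pd1 f p.1 p.2) := by
  have he : (fun p : ℝ × ℝ => pd1 f p.1 p.2)
      = fun p => fderiv ℝ (fun p : ℝ × ℝ => f p.1 p.2) p ((1:ℝ), (0:ℝ)) := by
    funext p
    rw [pd1_fderiv hf p.1 p.2]
  rw [he]
  exact (hf.fderiv_right (by simp)).clm_apply contDiff_const

lemma cd_pd2 (hf : ContDiff ℝ (⊤ : ℕ∞) (fun p : ℝ × ℝ => f p.1 p.2)) :
    ContDiff ℝ (⊤ : ℕ∞) (fun p : ℝ × ℝ => pd2 f p.1 p.2) := by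
  have he : (fun p : ℝ × ℝ => pd2 f p.1 p.2)
      = fun p => fderiv ℝ (fun p : ℝ × ℝ => f p.1 p.2) p ((0:ℝ), (1:ℝ)) := by
    funext p
    rw [pd2_fderiv hf p.1 p.2]
  rw [he]
  exact (hf.fderiv_right (by simp)).clm_apply contDiff_const

lemma clairaut (hf : ContDiff ℝ (⊤ : ℕ∞) (fun p : ℝ × ℝ => f p.1 p.2)) (t1 t2 : ℝ) :
    pd1 (pd2 f) t1 t2 = pd2 (pd1 f) t1 t2 := by
  set F : ℝ × ℝ → ℝ := fun p => f p.1 p.2 with hF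
  have hF' : HasFDerivAt (fderiv ℝ F) (fderiv ℝ (fderiv ℝ F) (t1, t2)) (t1, t2) :=
    (((hf.fderiv_right (m := (⊤ : ℕ∞)) (by simp)).differentiable (by simp)) (t1, t2)).hasFDerivAt
  have h1 : HasDerivAt (fun s : ℝ => (s, t2)) ((1:ℝ), (0:ℝ)) t1 :=
    (hasDerivAt_id t1).prodMk (hasDerivAt_const t1 t2)
  have h2 : HasDerivAt (fun s : ℝ => (t1, s)) ((0:ℝ), (1:ℝ)) t2 :=
    (hasDerivAt_const t2 t1).prodMk (hasDerivAt_id t2)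
  have e1 : pd1 (pd2 f) t1 t2
      = fderiv ℝ (fderiv ℝ F) (t1, t2) (1, 0) (0, 1) := by
    have hfun : (fun s => pd2 f s t2) = fun s => fderiv ℝ F (s, t2) ((0:ℝ), (1:ℝ)) := by
      funext s; exact pd2_fderiv hf s t2
    have h : HasDerivAt (fun s => fderiv ℝ F (s, t2) ((0:ℝ), (1:ℝ)))
        (((ContinuousLinearMap.apply ℝ ℝ ((0:ℝ), (1:ℝ))).comp
          (fderiv ℝ (fderiv ℝ F) (t1, t2))) (1, 0)) t1 :=
      by have := ((ContinuousLinearMap.apply ℝ ℝ ((0:ℝ), (1:ℝ))).hasFDerivAt.comp (t1, t2)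
        hF').comp_hasDerivAt t1 h1; exact this
    show deriv (fun s => pd2 f s t2) t1 = _
    rw [hfun, h.deriv]
    simp [ContinuousLinearMap.apply]
  have e2 : pd2 (pd1 f) t1 t2
      = fderiv ℝ (fderiv ℝ F) (t1, t2) (0, 1) (1, 0) := by
    have hfun : (fun s => pd1 f t1 s) = fun s => fderiv ℝ F (t1, s) ((1:ℝ), (0:ℝ)) := by
      funext s; exact pd1_fderiv hf t1 s
    have h : HasDerivAt (fun s => fderiv ℝ F (t1, s) ((1:ℝ), (0:ℝ)))
        (((ContinuousLinearMap.apply ℝ ℝ ((1:ℝ), (0:ℝ))).comp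
          (fderiv ℝ (fderiv ℝ F) (t1, t2))) (0, 1)) t2 :=
      ((ContinuousLinearMap.apply ℝ ℝ ((1:ℝ), (0:ℝ))).hasFDerivAt.comp (t1, t2)
        hF').comp_hasDerivAt t2 h2
    show deriv (fun s => pd1 f t1 s) t2 = _
    rw [hfun, h.deriv]
    simp [ContinuousLinearMap.apply]
  rw [e1, e2]
  exact (hf.contDiffAt.isSymmSndFDerivAt (by rw [minSmoothness_of_isRCLikeNormedField]; exact WithTop.coe_le_coe.mpr le_top)) (1, 0) (0, 1)

end helpers

/-- Closure of the semi-discrete Lagrangian 2-form for the first two Toda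
flows: ΔL₁₂ − D₁L₀₂ + D₂L₀₁ vanishes on solutions of the Toda hierarchy. -/
theorem toda_closure_on_solutions (q a au b L01 L02 L12 : ℤ → ℝ → ℝ → ℝ)
    (hq : ∀ n, ContDiff ℝ (⊤ : ℕ∞) (fun p : ℝ × ℝ => q n p.1 p.2))
    (ha : ∀ n t1 t2, a n t1 t2 = Real.exp (q (n + 1) t1 t2 - q n t1 t2))
    (hau : ∀ n t1 t2, au n t1 t2 = Real.exp (q n t1 t2 - q (n - 1) t1 t2))
    (hb : ∀ n t1 t2, b n t1 t2 = pd1 (q n) t1 t2)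
    (toda1 : ∀ n t1 t2, pd1 (pd1 (q n)) t1 t2 = a n t1 t2 - au n t1 t2)
    (toda2 : ∀ n t1 t2, pd2 (q n) t1 t2
      = (b n t1 t2) ^ 2 + a n t1 t2 + au n t1 t2)
    (hL01 : ∀ n t1 t2, L01 n t1 t2 = (1 / 2) * (pd1 (q n) t1 t2) ^ 2 - a n t1 t2)
    (hL02 : ∀ n t1 t2, L02 n t1 t2
      = pd1 (q n) t1 t2 * pd2 (q n) t1 t2 - (1 / 3) * (pd1 (q n) t1 t2) ^ 3
        - (pd1 (q n) t1 t2 + pd1 (q (n + 1)) t1 t2) * a n t1 t2)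
    (hL12 : ∀ n t1 t2, L12 n t1 t2
      = -(a n t1 t2) * ((pd1 (q (n + 1)) t1 t2) ^ 2 + pd1 (pd1 (q (n + 1))) t1 t2
          - pd2 (q (n + 1)) t1 t2 + a n t1 t2)) :
    ∀ n t1 t2,
      (L12 n t1 t2 - L12 (n - 1) t1 t2) - pd1 (L02 n) t1 t2 + pd2 (L01 n) t1 t2
        = 0 := by
  intro n t1 t2
  -- basic derivative facts at (t1, t2)
  have hBn := hda_pd1 (hq n) t1 t2
  have hBn1 := hda_pd1 (hq (n + 1)) t1 t2
  have hBBn := hda_pd1 (cd_pd1 (hq n)) t1 t2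
  have hBBn1 := hda_pd1 (cd_pd1 (hq (n + 1))) t1 t2
  have hC := hda_pd1 (cd_pd2 (hq n)) t1 t2
  have hB2n := hda_pd2 (hq n) t1 t2
  have hB2n1 := hda_pd2 (hq (n + 1)) t1 t2
  have hBB2 := hda_pd2 (cd_pd1 (hq n)) t1 t2
  -- derivative of a n in t1
  have hA1 : HasDerivAt (fun s => a n s t2)
      (a n t1 t2 * (pd1 (q (n + 1)) t1 t2 - pd1 (q n) t1 t2)) t1 := by
    have hfun : (fun s => a n s t2) = fun s => Real.exp (q (n + 1) s t2 - q n s t2) := by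
      funext s; exact ha n s t2
    rw [hfun]
    have h := (hBn1.fun_sub hBn).exp
    rw [← ha n t1 t2] at h
    simpa [mul_comm] using h
  -- derivative of a n in t2
  have hA2 : HasDerivAt (fun s => a n t1 s)
      (a n t1 t2 * (pd2 (q (n + 1)) t1 t2 - pd2 (q n) t1 t2)) t2 := by
    have hfun : (fun s => a n t1 s) = fun s => Real.exp (q (n + 1) t1 s - q n t1 s) := by
      funext s; exact ha n t1 s
    rw [hfun]
    have h := (hB2n1.fun_sub hB2n).exp
    rw [← ha n t1 t2] at h
    simpa [mul_comm] using h
  -- compute pd1 (L02 n) t1 t2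
  have e02 : pd1 (L02 n) t1 t2
      = (pd1 (pd1 (q n)) t1 t2 * pd2 (q n) t1 t2
          + pd1 (q n) t1 t2 * pd1 (pd2 (q n)) t1 t2)
        - (1 / 3) * (3 * (pd1 (q n) t1 t2) ^ 2 * pd1 (pd1 (q n)) t1 t2)
        - ((pd1 (pd1 (q n)) t1 t2 + pd1 (pd1 (q (n + 1))) t1 t2) * a n t1 t2
          + (pd1 (q n) t1 t2 + pd1 (q (n + 1)) t1 t2)
            * (a n t1 t2 * (pd1 (q (n + 1)) t1 t2 - pd1 (q n) t1 t2))) := by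
    have hfun : (fun s => L02 n s t2)
        = fun s => pd1 (q n) s t2 * pd2 (q n) s t2 - (1 / 3) * (pd1 (q n) s t2) ^ 3
            - (pd1 (q n) s t2 + pd1 (q (n + 1)) s t2) * a n s t2 := by
      funext s; exact hL02 n s t2
    have h := ((hBBn.fun_mul hC).fun_sub (((hBBn.fun_pow 3)).const_mul (1 / 3 : ℝ))).fun_sub
      ((hBBn.fun_add hBBn1).fun_mul hA1)
    show deriv (fun s => L02 n s t2) t1 = _
    rw [hfun, h.deriv]
    ring
  -- compute pd2 (L01 n) t1 t2
  have e01 : pd2 (L01 n) t1 t2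
      = (1 / 2) * (2 * pd1 (q n) t1 t2 * pd2 (pd1 (q n)) t1 t2)
        - a n t1 t2 * (pd2 (q (n + 1)) t1 t2 - pd2 (q n) t1 t2) := by
    have hfun : (fun s => L01 n t1 s)
        = fun s => (1 / 2) * (pd1 (q n) t1 s) ^ 2 - a n t1 s := by
      funext s; exact hL01 n t1 s
    have h := (((hBB2.fun_pow 2)).const_mul (1 / 2 : ℝ)).fun_sub hA2
    show deriv (fun s => L01 n t1 s) t2 = _
    rw [hfun, h.deriv]
    ring
  -- lattice shift identities
  have hAu : a (n - 1) t1 t2 = au n t1 t2 := by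
    rw [ha, hau, sub_add_cancel]
  have hAu1 : au (n + 1) t1 t2 = a n t1 t2 := by
    rw [hau, ha, add_sub_cancel_right]
  -- toda2 with b rewritten
  have toda2' : ∀ m, pd2 (q m) t1 t2
      = (pd1 (q m) t1 t2) ^ 2 + a m t1 t2 + au m t1 t2 := by
    intro m; rw [toda2, hb]
  rw [e02, e01, hL12 n t1 t2, hL12 (n - 1) t1 t2, clairaut (hq n) t1 t2]
  simp only [sub_add_cancel]
  rw [toda1 n t1 t2, toda1 (n + 1) t1 t2, toda2' n, toda2' (n + 1), hAu, hAu1]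
  ring
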